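/- arXiv:2505.09485 — 4 statements merged into one kernel-verified Lean document; each statement's English description precedes it below -/
import Mathlib

section
/- Let h : ℝ^n → ℝ ∪ {+∞} be a proper, closed, convex function and let 0 < μ₂ ≤ μ₁. Then for every y ∈ ℝ^n, the Moreau envelopes satisfy h_{μ₂}(y) ≤ h_{μ₁}(y) + (1/2) · ((μ₁ - μ₂)/μ₂) · μ₁ · ‖∇h_{μ₁}(y)‖², where ∇h_{μ₁}(y) = (y - prox_{μ₁ h}(y))/μ₁. -/
open Set

/-- Moreau envelope comparison for two parameters: the prox points `p₁, p₂` are the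
minimizers defining `h_{μ₁}(y)` and `h_{μ₂}(y)`. -/
theorem moreau_envelope_param_mono {n : ℕ} (h : EuclideanSpace ℝ (Fin n) → ℝ)
    (hconv : ConvexOn ℝ Set.univ h) (hlsc : LowerSemicontinuous h)
    (μ₁ μ₂ : ℝ) (hμ₂ : 0 < μ₂) (hμ : μ₂ ≤ μ₁)
    (y p₁ p₂ : EuclideanSpace ℝ (Fin n))
    (hp₁ : IsMinOn (fun z => h z + ‖z - y‖ ^ 2 / (2 * μ₁)) Set.univ p₁)
    (hp₂ : IsMinOn (fun z => h z + ‖z - y‖ ^ 2 / (2 * μ₂)) Set.univ p₂) :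
    h p₂ + ‖p₂ - y‖ ^ 2 / (2 * μ₂) ≤
      h p₁ + ‖p₁ - y‖ ^ 2 / (2 * μ₁)
        + (1 / 2) * ((μ₁ - μ₂) / μ₂) * μ₁ * ‖(1 / μ₁) • (y - p₁)‖ ^ 2 := by
  have hμ₁ : 0 < μ₁ := lt_of_lt_of_le hμ₂ hμ
  have key : h p₂ + ‖p₂ - y‖ ^ 2 / (2 * μ₂) ≤ h p₁ + ‖p₁ - y‖ ^ 2 / (2 * μ₂) :=
    hp₂ (mem_univ p₁)
  have hnorm : ‖(1 / μ₁) • (y - p₁)‖ ^ 2 = ‖p₁ - y‖ ^ 2 / μ₁ ^ 2 := by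
    rw [norm_smul, norm_sub_rev]
    rw [Real.norm_eq_abs, abs_of_pos (by positivity : (0:ℝ) < 1 / μ₁)]
    field_simp
  rw [hnorm]
  have hμ₁' : μ₁ ≠ 0 := ne_of_gt hμ₁
  have hμ₂' : μ₂ ≠ 0 := ne_of_gt hμ₂
  have : ‖p₁ - y‖ ^ 2 / (2 * μ₂) =
      ‖p₁ - y‖ ^ 2 / (2 * μ₁) + (1 / 2) * ((μ₁ - μ₂) / μ₂) * μ₁ * (‖p₁ - y‖ ^ 2 / μ₁ ^ 2) := by
    field_simp
    ring
  linarith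
end

section
/- Let h : ℝ^n → ℝ be convex and ℓ-Lipschitz continuous, and let 0 < μ₂ ≤ μ₁. Then for every y ∈ ℝ^n, h_{μ₂}(y) ≤ h_{μ₁}(y) + (1/2) · ((μ₁ - μ₂)/μ₂) · μ₁ · ℓ². -/
open Set

/-!
A minimiser `p` of `z ↦ h z + ‖z - y‖² / (2μ)` lies within `μ ℓ` of `y`: moving from `p` a
fraction `t` of the way towards `y` lowers the quadratic term by `t (2 - t) ‖p - y‖² / (2μ)` and
raises `h` by at most `ℓ t ‖p - y‖`, so `(2 - t) ‖p - y‖² ≤ 2 μ ℓ ‖p - y‖` for all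
`t ∈ (0, 1]`, which forces `‖p - y‖ ≤ μ ℓ`. Testing the `μ₂`-objective at the `μ₁`-minimiser
then costs only the change of the quadratic term,
`‖p₁ - y‖² (1/(2μ₂) - 1/(2μ₁)) ≤ (μ₁ ℓ)² (μ₁ - μ₂) / (2 μ₁ μ₂)`.
-/

namespace LipschitzWith

variable {E : Type*} [NormedAddCommGroup E] [NormedSpace ℝ E] {f : E → ℝ} {K : NNReal}
  {μ : ℝ} {y p : E}

theorem two_sub_mul_norm_sq_le_of_isMinOn_prox (hf : LipschitzWith K f) (hμ : 0 < μ)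
    (hp : IsMinOn (fun z => f z + ‖z - y‖ ^ 2 / (2 * μ)) univ p) {t : ℝ} (ht₀ : 0 < t)
    (ht₁ : t ≤ 1) :
    (2 - t) * ‖p - y‖ ^ 2 ≤ 2 * μ * K * ‖p - y‖ := by
  set d := ‖p - y‖
  set z := p + t • (y - p)
  have hzy : ‖z - y‖ = (1 - t) * d := by
    rw [show z - y = (1 - t) • (p - y) by simp only [z]; module, norm_smul,
      Real.norm_of_nonneg (by linarith)]
  have hzp : ‖z - p‖ = t * d := by
    rw [show z - p = t • (y - p) by simp only [z]; abel, norm_smul, Real.norm_of_nonneg ht₀.le,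
      norm_sub_rev]
  have hmin : f p + d ^ 2 / (2 * μ) ≤ f z + ((1 - t) * d) ^ 2 / (2 * μ) := by
    simpa only [mem_ofPred_eq, hzy] using hp (mem_univ z)
  have hlip : f z ≤ f p + K * (t * d) := by
    simpa only [dist_eq_norm, hzp] using hf.le_add_mul z p
  have hquad : d ^ 2 - ((1 - t) * d) ^ 2 ≤ 2 * μ * (K * (t * d)) := by
    have h := hmin.trans (add_le_add_left hlip _)
    field_simp at h
    linarith
  have : t * ((2 - t) * d ^ 2) ≤ t * (2 * μ * K * d) := by linear_combination hquad
  exact le_of_mul_le_mul_left this ht₀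

theorem norm_sub_le_of_isMinOn_prox (hf : LipschitzWith K f) (hμ : 0 < μ)
    (hp : IsMinOn (fun z => f z + ‖z - y‖ ^ 2 / (2 * μ)) univ p) :
    ‖p - y‖ ≤ μ * K := by
  set d := ‖p - y‖
  by_contra! hd
  have hμK : 0 ≤ μ * K := by positivity
  have hd₀ : 0 < d := hμK.trans_lt hd
  -- step `t = 1 - μK/d`, for which `(2 - t) d² = d² + μ K d`
  have key := hf.two_sub_mul_norm_sq_le_of_isMinOn_prox hμ hp (t := 1 - μ * K / d)
    (by rw [sub_pos, div_lt_one hd₀]; exact hd) (by linarith [div_nonneg hμK hd₀.le])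
  have : (2 - (1 - μ * K / d)) * d ^ 2 = d ^ 2 + μ * K * d := by field_simp; ring
  nlinarith

end LipschitzWith

theorem moreau_envelope_param_mono_lipschitz_general {n : ℕ} (h : EuclideanSpace ℝ (Fin n) → ℝ)
    (ℓ : NNReal) (hlip : LipschitzWith ℓ h)
    (μ₁ μ₂ : ℝ) (hμ₂ : 0 < μ₂) (hμ : μ₂ ≤ μ₁)
    (y p₁ p₂ : EuclideanSpace ℝ (Fin n))
    (hp₁ : IsMinOn (fun z => h z + ‖z - y‖ ^ 2 / (2 * μ₁)) Set.univ p₁)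
    (hp₂ : IsMinOn (fun z => h z + ‖z - y‖ ^ 2 / (2 * μ₂)) Set.univ p₂) :
    h p₂ + ‖p₂ - y‖ ^ 2 / (2 * μ₂) ≤
      h p₁ + ‖p₁ - y‖ ^ 2 / (2 * μ₁)
        + (1 / 2) * ((μ₁ - μ₂) / μ₂) * μ₁ * (ℓ : ℝ) ^ 2 := by
  have hμ₁ : 0 < μ₁ := hμ₂.trans_le hμ
  set d := ‖p₁ - y‖
  have hd : d ≤ μ₁ * ℓ := hlip.norm_sub_le_of_isMinOn_prox hμ₁ hp₁
  have hd_sq : d ^ 2 ≤ (μ₁ * ℓ) ^ 2 := pow_le_pow_left₀ (norm_nonneg _) hd 2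
  have hquad :
      d ^ 2 / (2 * μ₂) ≤ d ^ 2 / (2 * μ₁) + (1 / 2) * ((μ₁ - μ₂) / μ₂) * μ₁ * ℓ ^ 2 := by
    have hgap : d ^ 2 / (2 * μ₂) - d ^ 2 / (2 * μ₁) = d ^ 2 * ((μ₁ - μ₂) / (2 * μ₁ * μ₂)) := by
      field_simp
    have hbound : (1 / 2) * ((μ₁ - μ₂) / μ₂) * μ₁ * (ℓ : ℝ) ^ 2
        = (μ₁ * ℓ) ^ 2 * ((μ₁ - μ₂) / (2 * μ₁ * μ₂)) := by
      field_simp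
    have := mul_le_mul_of_nonneg_right hd_sq
      (div_nonneg (sub_nonneg.mpr hμ) (by positivity : (0 : ℝ) ≤ 2 * μ₁ * μ₂))
    linarith
  calc h p₂ + ‖p₂ - y‖ ^ 2 / (2 * μ₂) ≤ h p₁ + d ^ 2 / (2 * μ₂) := hp₂ (mem_univ p₁)
    _ ≤ _ := by linarith

/-- Moreau envelope comparison for a Lipschitz convex function. -/
theorem moreau_envelope_param_mono_lipschitz {n : ℕ} (h : EuclideanSpace ℝ (Fin n) → ℝ)
    (hconv : ConvexOn ℝ Set.univ h) (ℓ : NNReal) (hlip : LipschitzWith ℓ h)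
    (μ₁ μ₂ : ℝ) (hμ₂ : 0 < μ₂) (hμ : μ₂ ≤ μ₁)
    (y p₁ p₂ : EuclideanSpace ℝ (Fin n))
    (hp₁ : IsMinOn (fun z => h z + ‖z - y‖ ^ 2 / (2 * μ₁)) Set.univ p₁)
    (hp₂ : IsMinOn (fun z => h z + ‖z - y‖ ^ 2 / (2 * μ₂)) Set.univ p₂) :
    h p₂ + ‖p₂ - y‖ ^ 2 / (2 * μ₂) ≤
      h p₁ + ‖p₁ - y‖ ^ 2 / (2 * μ₁)
        + (1 / 2) * ((μ₁ - μ₂) / μ₂) * μ₁ * (ℓ : ℝ) ^ 2 :=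
  moreau_envelope_param_mono_lipschitz_general h ℓ hlip μ₁ μ₂ hμ₂ hμ y p₁ p₂ hp₁ hp₂
end

section
/- Let b₁ > 0 and b₂, …, b_n ≥ 0 be real numbers, and p ∈ (0,1). Then ∑_{k=1}^n b_k / (∑_{i=1}^k b_i)^p ≤ (1/(1-p)) (∑_{k=1}^n b_k)^{1-p}. -/
/-!
With `S k` the partial sums, concavity of `x ↦ x ^ (1 - p)` bounds each term:
`b k / S k ^ p ≤ (S k ^ (1 - p) - S (k - 1) ^ (1 - p)) / (1 - p)`, and the right-hand sides
telescope.
-/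

open Finset Real

theorem sub_div_rpow_le_rpow_sub_rpow_div {a s p : ℝ} (ha : 0 ≤ a) (has : a ≤ s) (hp0 : 0 ≤ p)
    (hp1 : p < 1) : (s - a) / s ^ p ≤ (s ^ (1 - p) - a ^ (1 - p)) / (1 - p) := by
  rcases has.eq_or_lt with rfl | has
  · simp
  have hs : 0 < s := ha.trans_lt has
  have amgm : a ^ (1 - p) * s ^ p ≤ (1 - p) * a + p * s :=
    geom_mean_le_arith_mean2_weighted (by linarith) hp0 ha hs.le (by ring)
  have hs_split : s ^ (1 - p) * s ^ p = s := by rw [← rpow_add hs]; simp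
  rw [div_le_div_iff₀ (rpow_pos_of_pos hs p) (by linarith), sub_mul _ _ (s ^ p), hs_split]
  linarith

theorem sum_range_sub_div_rpow_le {S : ℕ → ℝ} (hS0 : 0 ≤ S 0) (hS : Monotone S) {p : ℝ}
    (hp0 : 0 ≤ p) (hp1 : p < 1) (n : ℕ) :
    ∑ k ∈ range n, (S (k + 1) - S k) / S (k + 1) ^ p ≤
      (S n ^ (1 - p) - S 0 ^ (1 - p)) / (1 - p) :=
  calc ∑ k ∈ range n, (S (k + 1) - S k) / S (k + 1) ^ p
      ≤ ∑ k ∈ range n, (S (k + 1) ^ (1 - p) - S k ^ (1 - p)) / (1 - p) :=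
        sum_le_sum fun k _ ↦ sub_div_rpow_le_rpow_sub_rpow_div (hS0.trans (hS k.zero_le))
          (hS k.le_succ) hp0 hp1
    _ = (S n ^ (1 - p) - S 0 ^ (1 - p)) / (1 - p) := by
        rw [← sum_div, sum_range_sub (fun k ↦ S k ^ (1 - p))]

theorem sum_Icc_one_eq_sum_range {M : Type*} [AddCommMonoid M] (f : ℕ → M) (n : ℕ) :
    ∑ k ∈ Icc 1 n, f k = ∑ k ∈ range n, f (k + 1) := by
  rw [← Ico_add_one_right_eq_Icc, sum_Ico_eq_sum_range]
  simp [add_comm]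

theorem sum_div_pow_partial_sum_le_general (n : ℕ) (b : ℕ → ℝ)
    (hb1 : 0 < b 1) (hb : ∀ k, 2 ≤ k → 0 ≤ b k) (p : ℝ) (hp : p ∈ Set.Ioo (0 : ℝ) 1) :
    ∑ k ∈ Finset.Icc 1 n, b k / (∑ i ∈ Finset.Icc 1 k, b i) ^ p ≤
      (1 / (1 - p)) * (∑ k ∈ Finset.Icc 1 n, b k) ^ (1 - p) := by
  set S : ℕ → ℝ := fun k ↦ ∑ i ∈ Icc 1 k, b i
  have hS_succ (k : ℕ) : S (k + 1) - S k = b (k + 1) := by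
    simp only [S, sum_Icc_succ_top (Nat.le_add_left 1 k), add_sub_cancel_left]
  have hb_succ : ∀ k, 0 ≤ b (k + 1) := by
    rintro (_ | k)
    exacts [hb1.le, hb _ (by omega)]
  have hS_mono : Monotone S :=
    monotone_nat_of_le_succ fun k ↦ sub_nonneg.mp (hS_succ k ▸ hb_succ k)
  have hS0 : S 0 = 0 := by simp [S]
  have h := sum_range_sub_div_rpow_le hS0.ge hS_mono hp.1.le hp.2 n
  rw [hS0, zero_rpow (by linarith [hp.2]), sub_zero] at h
  simp only [hS_succ] at h
  rwa [sum_Icc_one_eq_sum_range, one_div_mul_eq_div]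

/-- Lemma 3 of Levy et al.: weighted sum bound for partial sums. -/
theorem sum_div_pow_partial_sum_le (n : ℕ) (hn : 1 ≤ n) (b : ℕ → ℝ)
    (hb1 : 0 < b 1) (hb : ∀ k, 2 ≤ k → 0 ≤ b k) (p : ℝ) (hp : p ∈ Set.Ioo (0 : ℝ) 1) :
    ∑ k ∈ Finset.Icc 1 n, b k / (∑ i ∈ Finset.Icc 1 k, b i) ^ p ≤
      (1 / (1 - p)) * (∑ k ∈ Finset.Icc 1 n, b k) ^ (1 - p) :=
  sum_div_pow_partial_sum_le_general n b hb1 hb p hp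
end

section
/- Let c, d, e ≥ 0 with c, d > 0, and α, β ∈ (0,1). Suppose x ≥ 0 satisfies x ≤ c·x^α + d·x^β + e. Then x ≤ 2(4α)^{α/(1-α)} c^{1/(1-α)} + 2(4β)^{β/(1-β)} d^{1/(1-β)} + 2e. -/
lemma young_aux (c x α : ℝ) (hc : 0 ≤ c) (hα : 0 < α) (hα1 : α < 1) (hx : 0 ≤ x) :
    c * x ^ α ≤ x / 4 + (4 * α) ^ (α / (1 - α)) * c ^ (1 / (1 - α)) := by
  have h1α : 0 < 1 - α := by linarith
  have h4α : 0 < 4 * α := by linarith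
  set p₁ : ℝ := x / (4 * α) with hp₁
  set p₂ : ℝ := (4 * α) ^ (α / (1 - α)) * c ^ (1 / (1 - α)) with hp₂
  have hp₁0 : 0 ≤ p₁ := div_nonneg hx (le_of_lt h4α)
  have hp₂0 : 0 ≤ p₂ := mul_nonneg (Real.rpow_nonneg h4α.le _) (Real.rpow_nonneg hc _)
  have key := Real.geom_mean_le_arith_mean2_weighted hα.le h1α.le hp₁0 hp₂0 (by ring)
  have e1 : p₁ ^ α * p₂ ^ (1 - α) = c * x ^ α := by
    rw [hp₁, hp₂, Real.div_rpow hx h4α.le,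
      Real.mul_rpow (Real.rpow_nonneg h4α.le _) (Real.rpow_nonneg hc _), ← Real.rpow_mul h4α.le, ← Real.rpow_mul hc]
    rw [div_mul_cancel₀ _ h1α.ne', one_div, inv_mul_cancel₀ h1α.ne', Real.rpow_one]
    field_simp
  have e2 : α * p₁ = x / 4 := by
    rw [hp₁]; field_simp
  rw [e1, e2] at key
  have : (1 - α) * p₂ ≤ p₂ := by nlinarith
  linarith

/-- Self-bounding inequality with two sublinear terms. -/
theorem self_bound_two_powers (c d e x α β : ℝ) (hc : 0 < c) (hd : 0 < d) (he : 0 ≤ e)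
    (hα : α ∈ Set.Ioo (0 : ℝ) 1) (hβ : β ∈ Set.Ioo (0 : ℝ) 1) (hx : 0 ≤ x)
    (h : x ≤ c * x ^ α + d * x ^ β + e) :
    x ≤ 2 * (4 * α) ^ (α / (1 - α)) * c ^ (1 / (1 - α))
        + 2 * (4 * β) ^ (β / (1 - β)) * d ^ (1 / (1 - β)) + 2 * e := by
  obtain ⟨hα0, hα1⟩ := hα
  obtain ⟨hβ0, hβ1⟩ := hβ
  have h1 := young_aux c x α hc.le hα0 hα1 hx
  have h2 := young_aux d x β hd.le hβ0 hβ1 hx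
  linarith
end
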